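/- arXiv:2107.11325 — 6 statements merged into one kernel-verified Lean document; each statement's English description precedes it below -/
import Mathlib

section
/- Let k be a field of characteristic zero and n ≥ 1. With Rₙ = k[a₀,…,a_{n−1}, b₀,…,b_{n−1}]/(c₀,…,c_{n−1}), c_j = Σ_{i=0}^{j} a_i b_{j−i} (and R₀ = k), the k-algebra homomorphism R_{n−1}[λ] → Rₙ/(b₀) determined by a_i ↦ a_i for 0 ≤ i ≤ n−2, b_j ↦ b_{j+1} for 0 ≤ j ≤ n−2, and λ ↦ a_{n−1} is well defined and is an isomorphism. (This is the identification μ_{n−1}^{−1}(0) × 𝔸¹ ≅ Z ×_C 𝔸¹ₓ of Proposition 2.19, where Z = μₙ^{−1}(0) maps to C = Spec k[x,y]/(xy) via (a₀, b₀).) -/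
open MvPolynomial

/-- The `j`-th relation `c_j = ∑_{i=0}^{j} a_i b_{j−i}` cutting out the zero fiber of the
truncated multiplication map `μₙ`, where `a_i = X (Sum.inl i)`, `b_i = X (Sum.inr i)`. -/
noncomputable def truncMulCoord (k : Type) [Field k] (n : ℕ) (j : Fin n) :
    MvPolynomial (Fin n ⊕ Fin n) k :=
  ∑ i : Fin (j.1 + 1),
    (X (Sum.inl (Fin.castLE j.isLt i)) : MvPolynomial (Fin n ⊕ Fin n) k) *
      X (Sum.inr ⟨j.1 - i.1, lt_of_le_of_lt (Nat.sub_le _ _) j.isLt⟩)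

/-- `Rₙ = k[a₀,…,a_{n−1},b₀,…,b_{n−1}]/(c₀,…,c_{n−1})`, the coordinate ring of the zero
fiber `μₙ⁻¹(0)`.  (For `n = 0` this is `k`, matching the convention `R₀ = k`.) -/
noncomputable abbrev RFiber (k : Type) [Field k] (n : ℕ) : Type :=
  MvPolynomial (Fin n ⊕ Fin n) k ⧸ Ideal.span (Set.range (truncMulCoord k n))

/-- The generator `a_i` of `Rₙ`. -/
noncomputable def aR (k : Type) [Field k] (n : ℕ) (i : Fin n) : RFiber k n :=
  Ideal.Quotient.mk _ (X (Sum.inl i))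

/-- The generator `b_i` of `Rₙ`. -/
noncomputable def bR (k : Type) [Field k] (n : ℕ) (i : Fin n) : RFiber k n :=
  Ideal.Quotient.mk _ (X (Sum.inr i))

/-!
Modulo `b₀` the relation `c_{j+1}` loses its term `a_{j+1} b₀` and becomes the relation `c_j`
in the shifted variables `a₀, …, a_{n−2}; b₁, …, b_{n−1}`. These are therefore the generators
and relations of `R_{n−1}`, while `a_{n−1}` occurs in no surviving relation and is free.
-/

open Finset

theorem sum_antidiagonal_succ_mul_of_eq_zero {R : Type*} [NonUnitalNonAssocSemiring R]
    {a b : ℕ → R} (hb : b 0 = 0) (j : ℕ) :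
    ∑ p ∈ antidiagonal (j + 1), a p.1 * b p.2 = ∑ p ∈ antidiagonal j, a p.1 * b (p.2 + 1) := by
  rw [Nat.sum_antidiagonal_succ', hb, mul_zero, zero_add]

namespace RFiber

variable {k : Type} [Field k] {n : ℕ}

section Lift

variable {A : Type*} [CommSemiring A] [Algebra k A]

theorem aeval_truncMulCoord (a b : ℕ → A) (j : Fin n) :
    aeval (Sum.elim (a ∘ Fin.val) (b ∘ Fin.val)) (truncMulCoord k n j) =
      ∑ p ∈ antidiagonal j.1, a p.1 * b p.2 := by
  simp [truncMulCoord, Fin.sum_univ_eq_sum_range (fun i => a i * b (j - i)),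
    Nat.sum_antidiagonal_eq_sum_range_succ_mk]

noncomputable def lift (a b : ℕ → A) (h : ∀ j < n, ∑ p ∈ antidiagonal j, a p.1 * b p.2 = 0) :
    RFiber k n →ₐ[k] A :=
  Ideal.Quotient.liftₐ _ (aeval (Sum.elim (a ∘ Fin.val) (b ∘ Fin.val))) fun _ hx => by
    refine (Ideal.span_le (I := RingHom.ker _)).mpr ?_ hx
    rintro _ ⟨j, rfl⟩
    exact (aeval_truncMulCoord a b j).trans (h j j.isLt)

@[simp]
theorem lift_aR (a b : ℕ → A) (h : ∀ j < n, ∑ p ∈ antidiagonal j, a p.1 * b p.2 = 0)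
    (i : Fin n) : lift a b h (aR k n i) = a i :=
  MvPolynomial.aeval_X _ _

@[simp]
theorem lift_bR (a b : ℕ → A) (h : ∀ j < n, ∑ p ∈ antidiagonal j, a p.1 * b p.2 = 0)
    (i : Fin n) : lift a b h (bR k n i) = b i :=
  MvPolynomial.aeval_X _ _

end Lift

theorem algHom_ext {A : Type*} [Semiring A] [Algebra k A] {f g : RFiber k n →ₐ[k] A}
    (ha : ∀ i, f (aR k n i) = g (aR k n i)) (hb : ∀ i, f (bR k n i) = g (bR k n i)) : f = g :=
  Ideal.Quotient.algHom_ext _ <| MvPolynomial.algHom_ext <| by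
    rintro (i | i)
    exacts [ha i, hb i]

variable (k n)

noncomputable def aSeq (i : ℕ) : RFiber k n :=
  if h : i < n then aR k n ⟨i, h⟩ else 0

noncomputable def bSeq (i : ℕ) : RFiber k n :=
  if h : i < n then bR k n ⟨i, h⟩ else 0

theorem sum_antidiagonal_aSeq_mul_bSeq {j : ℕ} (hj : j < n) :
    ∑ p ∈ antidiagonal j, aSeq k n p.1 * bSeq k n p.2 = 0 := by
  have hmk : aeval (Sum.elim (aSeq k n ∘ Fin.val) (bSeq k n ∘ Fin.val)) =
      Ideal.Quotient.mkₐ k (Ideal.span (Set.range (truncMulCoord k n))) := by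
    refine MvPolynomial.algHom_ext ?_
    rintro (i | i) <;> simp [aSeq, bSeq, aR, bR]
  rw [← aeval_truncMulCoord (k := k) (j := ⟨j, hj⟩), hmk, Ideal.Quotient.mkₐ_eq_mk,
    Ideal.Quotient.eq_zero_iff_mem]
  exact Ideal.subset_span ⟨_, rfl⟩

theorem sum_antidiagonal_map_aSeq_mul_bSeq {A : Type*} [Semiring A] (f : RFiber k n →+* A)
    {j : ℕ} (hj : j < n) :
    ∑ p ∈ antidiagonal j, f (aSeq k n p.1) * f (bSeq k n p.2) = 0 := by
  simp_rw [← map_mul, ← map_sum, sum_antidiagonal_aSeq_mul_bSeq k n hj, map_zero]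

section QuotB0

open scoped Polynomial

variable (m : ℕ)

abbrev QuotB0 : Type := RFiber k (m + 1) ⧸ Ideal.span {bR k (m + 1) ⟨0, m.succ_pos⟩}

noncomputable abbrev mkB0 : RFiber k (m + 1) →+* QuotB0 k m := Ideal.Quotient.mk _

theorem mkB0_bSeq_zero : mkB0 k m (bSeq k (m + 1) 0) = 0 :=
  Ideal.Quotient.eq_zero_iff_mem.mpr (Ideal.mem_span_singleton_self _)

theorem sum_antidiagonal_mkB0_aSeq_mul_bSeq_succ {j : ℕ} (hj : j < m) :
    ∑ p ∈ antidiagonal j, mkB0 k m (aSeq k (m + 1) p.1) * mkB0 k m (bSeq k (m + 1) (p.2 + 1)) =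
      0 := by
  rw [← sum_antidiagonal_succ_mul_of_eq_zero (a := fun i => mkB0 k m (aSeq k (m + 1) i))
    (b := fun i => mkB0 k m (bSeq k (m + 1) i)) (mkB0_bSeq_zero k m)]
  exact sum_antidiagonal_map_aSeq_mul_bSeq k (m + 1) (mkB0 k m) (by omega)

noncomputable def toQuotB0 : (RFiber k m)[X] →ₐ[k] QuotB0 k m :=
  Polynomial.aevalTower
    (lift (fun i => mkB0 k m (aSeq k (m + 1) i)) (fun i => mkB0 k m (bSeq k (m + 1) (i + 1)))
      fun _ => sum_antidiagonal_mkB0_aSeq_mul_bSeq_succ k m)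
    (mkB0 k m (aR k (m + 1) (Fin.last m)))

theorem toQuotB0_C_aR (i : Fin m) :
    toQuotB0 k m (Polynomial.C (aR k m i)) = mkB0 k m (aR k (m + 1) i.castSucc) := by
  rw [toQuotB0, Polynomial.aevalTower_C, lift_aR, aSeq, dif_pos (by omega)]
  rfl

theorem toQuotB0_C_bR (i : Fin m) :
    toQuotB0 k m (Polynomial.C (bR k m i)) = mkB0 k m (bR k (m + 1) i.succ) := by
  rw [toQuotB0, Polynomial.aevalTower_C, lift_bR, bSeq, dif_pos (by omega)]
  rfl

theorem toQuotB0_X : toQuotB0 k m Polynomial.X = mkB0 k m (aR k (m + 1) (Fin.last m)) :=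
  Polynomial.aevalTower_X _ _

noncomputable def aPoly (i : ℕ) : (RFiber k m)[X] :=
  if i = m then Polynomial.X else Polynomial.C (aSeq k m i)

noncomputable def bPoly : ℕ → (RFiber k m)[X]
  | 0 => 0
  | i + 1 => Polynomial.C (bSeq k m i)

theorem sum_antidiagonal_aPoly_mul_bPoly :
    ∀ j < m + 1, ∑ p ∈ antidiagonal j, aPoly k m p.1 * bPoly k m p.2 = 0
  | 0, _ => by simp [bPoly]
  | j + 1, hj => by
    rw [sum_antidiagonal_succ_mul_of_eq_zero rfl]
    refine (sum_congr rfl fun p hp => ?_).trans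
      (sum_antidiagonal_map_aSeq_mul_bSeq k m Polynomial.C (by omega : j < m))
    have hp1 : p.1 ≠ m := by have := mem_antidiagonal.mp hp; omega
    simp [aPoly, bPoly, hp1]

noncomputable def ofQuotB0 : QuotB0 k m →ₐ[k] (RFiber k m)[X] :=
  Ideal.Quotient.liftₐ _ (lift (aPoly k m) (bPoly k m) (sum_antidiagonal_aPoly_mul_bPoly k m))
    fun _ hx => (Ideal.span_singleton_le_iff_mem (RingHom.ker _)).mpr
      (lift_bR _ _ (sum_antidiagonal_aPoly_mul_bPoly k m) _) hx

theorem ofQuotB0_mk_aR (i : Fin (m + 1)) :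
    ofQuotB0 k m (mkB0 k m (aR k (m + 1) i)) = aPoly k m i :=
  lift_aR _ _ (sum_antidiagonal_aPoly_mul_bPoly k m) _

theorem ofQuotB0_mk_bR (i : Fin (m + 1)) :
    ofQuotB0 k m (mkB0 k m (bR k (m + 1) i)) = bPoly k m i :=
  lift_bR _ _ (sum_antidiagonal_aPoly_mul_bPoly k m) _

theorem ofQuotB0_comp_toQuotB0 : (ofQuotB0 k m).comp (toQuotB0 k m) = AlgHom.id k _ := by
  refine Polynomial.algHom_ext' (algHom_ext (fun i => ?_) (fun i => ?_)) ?_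
  · simp [toQuotB0_C_aR, ofQuotB0_mk_aR, aPoly, aSeq, i.isLt.ne]
  · simp [toQuotB0_C_bR, ofQuotB0_mk_bR, bPoly, bSeq]
  · simp [toQuotB0_X, ofQuotB0_mk_aR, aPoly]

theorem toQuotB0_comp_ofQuotB0 : (toQuotB0 k m).comp (ofQuotB0 k m) = AlgHom.id k _ := by
  refine Ideal.Quotient.algHom_ext _
    (algHom_ext (Fin.lastCases ?_ fun i => ?_) (Fin.cases ?_ fun i => ?_)) <;>
    simp only [AlgHom.comp_apply, Ideal.Quotient.mkₐ_eq_mk, AlgHom.id_apply]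
  · rw [ofQuotB0_mk_aR, aPoly, if_pos (Fin.val_last m), toQuotB0_X]
  · rw [ofQuotB0_mk_aR, Fin.val_castSucc, aPoly, if_neg i.isLt.ne, aSeq, dif_pos i.isLt,
      toQuotB0_C_aR]
  · rw [ofQuotB0_mk_bR, Fin.val_zero, bPoly, map_zero, eq_comm]
    exact mkB0_bSeq_zero k m
  · rw [ofQuotB0_mk_bR, Fin.val_succ, bPoly, bSeq, dif_pos i.isLt, toQuotB0_C_bR]

end QuotB0

end RFiber

/-- the `k`-algebra homomorphism `R_{n−1}[λ] → Rₙ/(b₀)` determined by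
`a_i ↦ a_i` for `0 ≤ i ≤ n−2`, `b_j ↦ b_{j+1}` for `0 ≤ j ≤ n−2`, and `λ ↦ a_{n−1}`
is well defined (it exists) and is an isomorphism.  This is the identification
`μ_{n−1}⁻¹(0) × 𝔸¹ ≅ Z ×_C 𝔸¹ₓ` of Proposition 2.19. -/
theorem rFiber_quot_b0_iso (k : Type) [Field k] (n : ℕ) (hn : 0 < n) :
    ∃ ψ : Polynomial (RFiber k (n - 1)) →ₐ[k]
        (RFiber k n ⧸ Ideal.span {bR k n ⟨0, hn⟩}),
      (∀ i : Fin (n - 1),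
        ψ (Polynomial.C (aR k (n - 1) i)) =
          Ideal.Quotient.mk _ (aR k n (Fin.castLE (Nat.sub_le n 1) i))) ∧
      (∀ j : Fin (n - 1),
        ψ (Polynomial.C (bR k (n - 1) j)) =
          Ideal.Quotient.mk _ (bR k n ⟨j.1 + 1, by have := j.isLt; omega⟩)) ∧
      ψ Polynomial.X =
        Ideal.Quotient.mk _ (aR k n ⟨n - 1, by omega⟩) ∧
      Function.Bijective ψ := by
  obtain ⟨m, rfl⟩ : ∃ m, n = m + 1 := ⟨n - 1, by omega⟩
  exact ⟨RFiber.toQuotB0 k m, RFiber.toQuotB0_C_aR k m, RFiber.toQuotB0_C_bR k m,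
    RFiber.toQuotB0_X k m,
    (AlgEquiv.ofAlgHom _ _ (RFiber.toQuotB0_comp_ofQuotB0 k m)
      (RFiber.ofQuotB0_comp_toQuotB0 k m)).bijective⟩
end

section
/- Let k be a field of characteristic zero and n ≥ 1. The k-algebra homomorphism Aₙ/(bₙ) → A_{n−1} determined by a_i ↦ a_i for all i ≥ 0 and b_j ↦ b_j for 1 ≤ j ≤ n−1 is well defined and is an isomorphism; for n = 1 this gives A₁/(b₁) ≅ k[a₀]. (This is the identification Z^{≤n} ×_{C/𝔾ₘ} 𝔸¹/𝔾ₘ ≅ Z^{≤n−1} of Proposition 2.20(2).) -/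
/-!
Write `Aₙ₊₁ = k[a, b₁, …, bₙ₊₁]/Iₙ₊₁`. Expanding the sum, `rₘ⁽ⁿ⁺¹⁾ = rₘ⁽ⁿ⁾ + a_{m+n+1} bₙ₊₁`, and
`rₘ⁽ⁿ⁾ = 0` for `m < -n`. Hence setting `bₙ₊₁ = 0` maps `Iₙ₊₁` into `Iₙ`, while the inclusion of
variables maps `Iₙ` into `Iₙ₊₁ + (bₙ₊₁)`; the two induced maps between `Aₙ₊₁/(bₙ₊₁)` and `Aₙ`
are mutually inverse, as one checks on generators.
-/

open MvPolynomial

/-- The variable `a_l` for `l : ℤ`, with the convention `a_l = 0` for `l < 0`.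
Here `a_i = X (Sum.inl i)`, and the variable `b_j` (for `1 ≤ j ≤ n`) is
`X (Sum.inr ⟨j−1⟩)`. -/
noncomputable def aVar (k : Type) [Field k] (n : ℕ) (l : ℤ) :
    MvPolynomial (ℕ ⊕ Fin n) k :=
  if 0 ≤ l then X (Sum.inl l.toNat) else 0

/-- The relation `r_m = ∑_{j=1}^{n} a_{m+j} b_j − (m+1) a_{m+1}` (with `a_l = 0` for
`l < 0`), for `m : ℤ`, `m ≥ −n`: equating coefficients of `t^m dt` in
`∑ i a_i t^{i−1} dt = (∑ a_i t^i)·(∑_{j=1}^n b_j t^{−j} dt)`. -/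
noncomputable def relA (k : Type) [Field k] (n : ℕ) (m : ℤ) :
    MvPolynomial (ℕ ⊕ Fin n) k :=
  (∑ j : Fin n, aVar k n (m + (j.1 + 1)) * X (Sum.inr j)) - (m + 1) • aVar k n (m + 1)

/-- `Aₙ`: the commutative `k`-algebra with generators `a₀, a₁, …` and `b₁, …, bₙ` and
relations `r_m = 0` for all integers `m ≥ −n`. -/
noncomputable abbrev AAlg (k : Type) [Field k] (n : ℕ) : Type :=
  MvPolynomial (ℕ ⊕ Fin n) k ⧸
    Ideal.span (Set.range fun m : {m : ℤ // -(n : ℤ) ≤ m} => relA k n m.1)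

/-- The generator `a_i` of `Aₙ`. -/
noncomputable def aA (k : Type) [Field k] (n : ℕ) (i : ℕ) : AAlg k n :=
  Ideal.Quotient.mk _ (X (Sum.inl i))

/-- The generator `b_{j+1}` of `Aₙ` (for `j : Fin n`). -/
noncomputable def bA (k : Type) [Field k] (n : ℕ) (j : Fin n) : AAlg k n :=
  Ideal.Quotient.mk _ (X (Sum.inr j))

namespace AAlg

variable {k : Type} [Field k] {n : ℕ}

noncomputable abbrev relIdeal (k : Type) [Field k] (n : ℕ) :
    Ideal (MvPolynomial (ℕ ⊕ Fin n) k) :=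
  Ideal.span (Set.range fun m : {m : ℤ // -(n : ℤ) ≤ m} => relA k n m.1)

lemma aVar_of_neg {l : ℤ} (h : l < 0) : aVar k n l = 0 :=
  if_neg (not_le.mpr h)

lemma relA_of_lt {m : ℤ} (h : m < -n) : relA k n m = 0 := by
  have hterm (j : Fin n) : aVar k n (m + (j.1 + 1)) = 0 := aVar_of_neg (by omega)
  rcases (show m + 1 < 0 ∨ m + 1 = 0 by omega) with hm | hm
  · simp [relA, hterm, aVar_of_neg hm]
  · simp [relA, hterm, hm]

lemma relA_mem_relIdeal (m : ℤ) : relA k n m ∈ relIdeal k n := by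
  rcases lt_or_ge m (-n) with h | h
  · simp [relA_of_lt h]
  · exact Ideal.subset_span ⟨⟨m, h⟩, rfl⟩

variable (k n) in
noncomputable def killLastB :
    MvPolynomial (ℕ ⊕ Fin (n + 1)) k →ₐ[k] MvPolynomial (ℕ ⊕ Fin n) k :=
  aeval (Sum.elim (X ∘ Sum.inl) (Fin.lastCases 0 (X ∘ Sum.inr)))

@[simp] lemma killLastB_X_inl (i : ℕ) : killLastB k n (X (Sum.inl i)) = X (Sum.inl i) := by
  simp [killLastB]

@[simp] lemma killLastB_X_castSucc (j : Fin n) :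
    killLastB k n (X (Sum.inr j.castSucc)) = X (Sum.inr j) := by
  simp [killLastB]

@[simp] lemma killLastB_X_last : killLastB k n (X (Sum.inr (Fin.last n))) = 0 := by
  simp [killLastB]

lemma killLastB_aVar (l : ℤ) : killLastB k n (aVar k (n + 1) l) = aVar k n l := by
  unfold aVar; split_ifs <;> simp

lemma rename_castSucc_aVar (l : ℤ) :
    rename (Sum.map id Fin.castSucc) (aVar k n l) = aVar k (n + 1) l := by
  unfold aVar; split_ifs <;> simp

lemma killLastB_relA (m : ℤ) : killLastB k n (relA k (n + 1) m) = relA k n m := by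
  simp [relA, Fin.sum_univ_castSucc, killLastB_aVar]

lemma rename_castSucc_relA (m : ℤ) :
    rename (Sum.map id Fin.castSucc) (relA k n m) =
      relA k (n + 1) m - aVar k (n + 1) (m + (n + 1)) * X (Sum.inr (Fin.last n)) := by
  simp only [relA, zsmul_eq_mul, Int.cast_add, Int.cast_one, map_sub, map_sum, map_mul,
    rename_castSucc_aVar, rename_X, Sum.map_inr, map_add, map_intCast, map_one,
    Fin.sum_univ_castSucc, Fin.val_castSucc, Fin.val_last]
  ring

lemma relIdeal_le_comap_killLastB : relIdeal k (n + 1) ≤ (relIdeal k n).comap (killLastB k n) :=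
  Ideal.span_le.2 <| Set.range_subset_iff.2 fun m => by
    simpa [killLastB_relA] using relA_mem_relIdeal (k := k) (n := n) m.1

lemma relIdeal_le_comap_rename_castSucc :
    relIdeal k n ≤ (relIdeal k (n + 1) ⊔ Ideal.span {X (Sum.inr (Fin.last n))}).comap
      (rename (Sum.map id Fin.castSucc)) :=
  Ideal.span_le.2 <| Set.range_subset_iff.2 fun m => by
    rw [SetLike.mem_coe, Ideal.mem_comap, rename_castSucc_relA]
    exact Ideal.sub_mem _ (Ideal.mem_sup_left (relA_mem_relIdeal m.1))
      (Ideal.mem_sup_right (Ideal.mul_mem_left _ _ (Ideal.mem_span_singleton_self _)))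

lemma killLastB_comp_rename_castSucc :
    (killLastB k n).comp (rename (Sum.map id Fin.castSucc)) = AlgHom.id k _ := by
  ext (i | j) <;> simp

variable (k n)

noncomputable abbrev QuotBLast : Type :=
  AAlg k (n + 1) ⧸ Ideal.span {bA k (n + 1) (Fin.last n)}

noncomputable def mkQuotBLast : MvPolynomial (ℕ ⊕ Fin (n + 1)) k →ₐ[k] QuotBLast k n :=
  (Ideal.Quotient.mkₐ k _).comp (Ideal.Quotient.mkₐ k _)

lemma relIdeal_sup_le_ker_mkQuotBLast :
    relIdeal k (n + 1) ⊔ Ideal.span {X (Sum.inr (Fin.last n))} ≤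
      RingHom.ker (mkQuotBLast k n) := by
  refine sup_le (fun p hp => ?_) (Ideal.span_le.2 ?_)
  · simp only [RingHom.mem_ker, mkQuotBLast, AlgHom.comp_apply, Ideal.Quotient.mkₐ_eq_mk,
      Ideal.Quotient.eq_zero_iff_mem.2 hp, map_zero]
  · rintro _ rfl
    exact Ideal.Quotient.eq_zero_iff_mem.2 (Ideal.mem_span_singleton_self _)

noncomputable def aalgSuccToAAlg : AAlg k (n + 1) →ₐ[k] AAlg k n :=
  Ideal.Quotient.liftₐ _ ((Ideal.Quotient.mkₐ k _).comp (killLastB k n)) fun _ hp =>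
    Ideal.Quotient.eq_zero_iff_mem.2 (relIdeal_le_comap_killLastB hp)

lemma aalgSuccToAAlg_mk (p : MvPolynomial (ℕ ⊕ Fin (n + 1)) k) :
    aalgSuccToAAlg k n (Ideal.Quotient.mk _ p) = Ideal.Quotient.mk _ (killLastB k n p) :=
  rfl

noncomputable def quotBLastToAAlg : QuotBLast k n →ₐ[k] AAlg k n :=
  Ideal.Quotient.liftₐ _ (aalgSuccToAAlg k n) fun _ hp => by
    obtain ⟨c, rfl⟩ := Ideal.mem_span_singleton'.1 hp
    rw [map_mul, bA, aalgSuccToAAlg_mk, killLastB_X_last, map_zero, mul_zero]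

lemma quotBLastToAAlg_mk (p : MvPolynomial (ℕ ⊕ Fin (n + 1)) k) :
    quotBLastToAAlg k n (mkQuotBLast k n p) = Ideal.Quotient.mk _ (killLastB k n p) :=
  rfl

noncomputable def aalgToQuotBLast : AAlg k n →ₐ[k] QuotBLast k n :=
  Ideal.Quotient.liftₐ _ ((mkQuotBLast k n).comp (rename (Sum.map id Fin.castSucc))) fun _ hp =>
    relIdeal_sup_le_ker_mkQuotBLast k n (relIdeal_le_comap_rename_castSucc hp)

lemma mkQuotBLast_X_last : mkQuotBLast k n (X (Sum.inr (Fin.last n))) = 0 :=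
  relIdeal_sup_le_ker_mkQuotBLast k n (Ideal.mem_sup_right (Ideal.mem_span_singleton_self _))

lemma mkQuotBLast_comp_rename_killLastB :
    (mkQuotBLast k n).comp ((rename (Sum.map id Fin.castSucc)).comp (killLastB k n)) =
      mkQuotBLast k n := by
  ext (i | j)
  · simp
  · induction j using Fin.lastCases <;> simp [mkQuotBLast_X_last]

noncomputable def quotBLastEquiv : QuotBLast k n ≃ₐ[k] AAlg k n :=
  AlgEquiv.ofAlgHom (quotBLastToAAlg k n) (aalgToQuotBLast k n)
    (Ideal.Quotient.algHom_ext _ <| AlgHom.ext fun p =>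
      congrArg (Ideal.Quotient.mk _) (AlgHom.congr_fun killLastB_comp_rename_castSucc p))
    (Ideal.Quotient.algHom_ext _ <| Ideal.Quotient.algHom_ext _ <| AlgHom.ext fun p =>
      AlgHom.congr_fun (mkQuotBLast_comp_rename_killLastB k n) p)

lemma quotBLastEquiv_aA (i : ℕ) :
    quotBLastEquiv k n (Ideal.Quotient.mk _ (aA k (n + 1) i)) = aA k n i :=
  (quotBLastToAAlg_mk k n _).trans (congrArg _ (killLastB_X_inl i))

lemma quotBLastEquiv_bA_castSucc (j : Fin n) :
    quotBLastEquiv k n (Ideal.Quotient.mk _ (bA k (n + 1) j.castSucc)) = bA k n j :=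
  (quotBLastToAAlg_mk k n _).trans (congrArg _ (killLastB_X_castSucc j))

end AAlg

/-- the `k`-algebra homomorphism `Aₙ/(bₙ) → A_{n−1}` determined by
`a_i ↦ a_i` for all `i ≥ 0` and `b_j ↦ b_j` for `1 ≤ j ≤ n−1` is well defined (it exists)
and is an isomorphism.  (For `n = 1` this gives `A₁/(b₁) ≅ k[a₀]`.)  This is the
identification `Z^{≤n} ×_{C/𝔾ₘ} 𝔸¹/𝔾ₘ ≅ Z^{≤n−1}` of Proposition 2.20(2). -/
theorem aAlg_quot_bn_iso (k : Type) [Field k] (n : ℕ) (hn : 1 ≤ n) :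
    ∃ ψ : (AAlg k n ⧸ Ideal.span {bA k n ⟨n - 1, by omega⟩}) →ₐ[k] AAlg k (n - 1),
      (∀ i : ℕ, ψ (Ideal.Quotient.mk _ (aA k n i)) = aA k (n - 1) i) ∧
      (∀ j : Fin (n - 1),
        ψ (Ideal.Quotient.mk _ (bA k n (Fin.castLE (Nat.sub_le n 1) j))) = bA k (n - 1) j) ∧
      Function.Bijective ψ := by
  obtain ⟨n, rfl⟩ : ∃ m, n = m + 1 := ⟨n - 1, by omega⟩
  exact ⟨(AAlg.quotBLastEquiv k n).toAlgHom, AAlg.quotBLastEquiv_aA k n,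
    AAlg.quotBLastEquiv_bA_castSucc k n, (AAlg.quotBLastEquiv k n).bijective⟩
end

section
/- Let k be a field of characteristic zero and n ≥ 2. In the localization Aₙ[bₙ^{−1}] of Aₙ away from bₙ, the image of every generator a_i (i ≥ 0) is zero, and the natural k-algebra map from the localization k[b₁,…,bₙ][bₙ^{−1}] of the polynomial ring k[b₁,…,bₙ] away from bₙ to Aₙ[bₙ^{−1}] is an isomorphism. (This identifies the open locus Uₙ = Z^{≤n} ∖ Z^{≤n−1} with (𝔸¹∖0) × 𝔸^{n−1} × B𝔾ₘ, Lemma 2.26.) -/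
open MvPolynomial

/-- The natural `k`-algebra map `k[b₁,…,bₙ] → Aₙ`, `b_j ↦ b_j` (the variable indexed by
`j : Fin n` denotes `b_{j+1}`). -/
noncomputable def bPolyToA (k : Type) [Field k] (n : ℕ) :
    MvPolynomial (Fin n) k →+* AAlg k n :=
  (aeval (bA k n)).toRingHom

/-!
Inverting `bₙ` kills every `aᵢ`: the relation `r_{i-n}` reads
`aᵢ bₙ = (i-n+1) a_{i-n+1} - ∑_{j<n} a_{i-n+j} b_j`, whose right side involves only `a_l`
with `l < i` (this is where `n ≥ 2` enters), so induction on `i` gives `aᵢ = 0`. Hence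
`Aₙ[bₙ⁻¹]` agrees with the localization of the retract `k[b₁,…,bₙ]` of `Aₙ` obtained by
setting all `aᵢ = 0`.
-/

namespace Localization

variable {R S : Type*} [CommRing R] [CommRing S]

theorem awayMap_bijective_of_leftInverse (f : R →+* S) (g : S →+* R) (r : R)
    (hgf : Function.LeftInverse g f)
    (hfg : ∀ y, algebraMap S (Away (f r)) (f (g y)) = algebraMap S (Away (f r)) y) :
    Function.Bijective (awayMap f r) := by
  refine ⟨awayMap_injective_iff.2 fun a ha => ⟨0, by rw [← hgf a, ha, map_zero, mul_zero]⟩,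
    awayMap_surjective_iff.2 fun y => ?_⟩
  obtain ⟨⟨_, m, rfl⟩, hm⟩ := (IsLocalization.eq_iff_exists (Submonoid.powers (f r)) _).1 (hfg y)
  exact ⟨r ^ m * g y, m, by simpa using hm⟩

end Localization

section AAlg

variable (k : Type) [Field k] (n : ℕ)

theorem mk_relA {m : ℤ} (hm : -(n : ℤ) ≤ m) :
    (Ideal.Quotient.mk _ (relA k n m) : AAlg k n) = 0 :=
  Ideal.Quotient.eq_zero_iff_mem.2 (Ideal.subset_span ⟨⟨m, hm⟩, rfl⟩)

theorem aA_eq_zero_of_isUnit {L : Type*} [CommRing L] (hn : 2 ≤ n) (f : AAlg k n →+* L)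
    (hb : IsUnit (f (bPolyToA k n (X ⟨n - 1, Nat.sub_one_lt (by omega)⟩)))) (i : ℕ) :
    f (aA k n i) = 0 := by
  induction i using Nat.strong_induction_on with
  | _ i ih =>
  set F := f.comp (Ideal.Quotient.mk _)
  have hlow : ∀ l : ℤ, l < i → F (aVar k n l) = 0 := by
    intro l hl
    unfold aVar
    split_ifs
    · exact ih l.toNat (by omega)
    · exact map_zero F
  have hrel : F (relA k n (i - n)) = F (aVar k n i) * F (X (Sum.inr ⟨n - 1, by omega⟩)) := by
    rw [relA, map_sub, map_sum, zsmul_eq_mul, map_mul, hlow _ (by omega), mul_zero, sub_zero,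
      Finset.sum_eq_single_of_mem ⟨n - 1, by omega⟩ (Finset.mem_univ _) fun j _ hj => by
        rw [map_mul, hlow _ (by have := Fin.val_ne_of_ne hj; dsimp only at this; omega), zero_mul],
      map_mul]
    congr 3
    dsimp only
    omega
  have hzero : F (relA k n (i - n)) = 0 := by
    simp only [F, RingHom.comp_apply, mk_relA k n (show -(n : ℤ) ≤ i - n by omega), map_zero]
  rw [hrel] at hzero
  simp only [bPolyToA, AlgHom.toRingHom_eq_coe, RingHom.coe_coe, aeval_X] at hb
  simpa [F, aVar, aA] using hb.mul_left_eq_zero.1 hzero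

noncomputable def bPolyRetraction : AAlg k n →+* MvPolynomial (Fin n) k :=
  Ideal.Quotient.lift _ (eval₂Hom C (Sum.elim 0 X)) fun p hp => by
    refine RingHom.mem_ker.1 (Ideal.span_le.2 ?_ hp)
    rintro _ ⟨m, rfl⟩
    simp [relA, aVar, apply_ite]

theorem bPolyRetraction_bPolyToA (p : MvPolynomial (Fin n) k) :
    bPolyRetraction k n (bPolyToA k n p) = p := by
  induction p using MvPolynomial.induction_on <;>
    simp_all [bPolyToA, bPolyRetraction, bA, ← Ideal.Quotient.mk_algebraMap, algebraMap_eq]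

theorem bPolyToA_bPolyRetraction_eq {L : Type*} [CommRing L] (f : AAlg k n →+* L)
    (ha : ∀ i, f (aA k n i) = 0) (x : AAlg k n) :
    f (bPolyToA k n (bPolyRetraction k n x)) = f x := by
  obtain ⟨p, rfl⟩ := Ideal.Quotient.mk_surjective x
  induction p using MvPolynomial.induction_on with
  | C a => simp [bPolyToA, bPolyRetraction, ← Ideal.Quotient.mk_algebraMap, algebraMap_eq]
  | add p q hp hq => simp_all
  | mul_X p s hp =>
    cases s <;> simp_all [bPolyToA, bPolyRetraction, bA, aA]

end AAlg

/-- for `n ≥ 2`, in `Aₙ[bₙ⁻¹]` the image of every generator `a_i` is zero,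
and the natural map `k[b₁,…,bₙ][bₙ⁻¹] → Aₙ[bₙ⁻¹]` is an isomorphism. -/
theorem aAlg_localization_bn (k : Type) [Field k] (n : ℕ) (hn : 2 ≤ n) :
    (∀ i : ℕ,
      algebraMap (AAlg k n)
        (Localization.Away (bPolyToA k n (X ⟨n - 1, by omega⟩))) (aA k n i) = 0) ∧
    Function.Bijective
      (Localization.awayMap (bPolyToA k n) (X ⟨n - 1, by omega⟩) :
        Localization.Away (X ⟨n - 1, by omega⟩ : MvPolynomial (Fin n) k) →+*
          Localization.Away (bPolyToA k n (X ⟨n - 1, by omega⟩))) := by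
  have ha := aA_eq_zero_of_isUnit k n hn _ (IsLocalization.Away.algebraMap_isUnit
    (S := Localization.Away (bPolyToA k n (X ⟨n - 1, _⟩))) _)
  exact ⟨ha, Localization.awayMap_bijective_of_leftInverse _ (bPolyRetraction k n) _
    (bPolyRetraction_bPolyToA k n) (bPolyToA_bPolyRetraction_eq k n _ ha)⟩
end

section
/- Let k be a field of characteristic zero and let A₁ = k[b, a₀, a₁, a₂, …]/((b − i)·a_i : i ∈ ℕ). Let S ⊂ A₁ be the multiplicative set generated by the elements {b − m : m ∈ ℕ} (including m = 0). Then in the localization S^{−1}A₁ the image of every a_i is zero, and the natural k-algebra map from the localization of the polynomial ring k[b] at the multiplicative set generated by {b − m : m ∈ ℕ} to S^{−1}A₁ is an isomorphism. (This identifies the pro-open locus U₁ ⊂ Z^{≤1} with (𝔸¹ ∖ ℤ^{≥0}) × B𝔾ₘ, Lemma 2.27.) -/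
open MvPolynomial

/-- `A₁ = k[b, a₀, a₁, a₂, …]/((b − i)·a_i : i ∈ ℕ)`.  Here `b = X (Sum.inl ())` and
`a_i = X (Sum.inr i)`. -/
noncomputable abbrev AOne (k : Type) [Field k] : Type :=
  MvPolynomial (Unit ⊕ ℕ) k ⧸
    Ideal.span (Set.range fun i : ℕ =>
      (X (Sum.inl ()) - (i : MvPolynomial (Unit ⊕ ℕ) k)) * X (Sum.inr i))

/-- The generator `b` of `A₁`. -/
noncomputable def bOne (k : Type) [Field k] : AOne k :=
  Ideal.Quotient.mk _ (X (Sum.inl ()))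

/-- The generator `a_i` of `A₁`. -/
noncomputable def aOne (k : Type) [Field k] (i : ℕ) : AOne k :=
  Ideal.Quotient.mk _ (X (Sum.inr i))

/-- The multiplicative set `S ⊂ A₁` generated by the elements `b − m`, `m ∈ ℕ`. -/
noncomputable abbrev SOne (k : Type) [Field k] : Submonoid (AOne k) :=
  Submonoid.closure (Set.range fun m : ℕ => bOne k - (m : AOne k))

/-- The multiplicative set of `k[b]` generated by the elements `b − m`, `m ∈ ℕ`. -/
noncomputable abbrev SPoly (k : Type) [Field k] : Submonoid (Polynomial k) :=
  Submonoid.closure (Set.range fun m : ℕ => Polynomial.X - (m : Polynomial k))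

/-- The natural map `k[b] → A₁`, `b ↦ b`. -/
noncomputable def polyToAOne (k : Type) [Field k] : Polynomial k →+* AOne k :=
  (Polynomial.aeval (bOne k)).toRingHom

/-!
Killing every `a_i` gives a retraction `A₁ → k[b]` of `k[b] → A₁` that maps `S` into the
multiplicative set of `k[b]`. In `S⁻¹A₁` each `a_i` vanishes, being annihilated by the unit
`b − i`, so the composite `A₁ → k[b] → A₁` becomes the identity after localizing and the
retraction induces the inverse isomorphism.
-/

theorem IsLocalization.map_bijective_of_leftInverse {R A Rₘ Aₜ : Type*} [CommSemiring R]
    [CommSemiring A] [CommSemiring Rₘ] [CommSemiring Aₜ] [Algebra R Rₘ] [Algebra A Aₜ]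
    {M : Submonoid R} {T : Submonoid A} [IsLocalization M Rₘ] [IsLocalization T Aₜ]
    {f : R →+* A} {r : A →+* R}
    (hrf : Function.LeftInverse r f) (hM : M ≤ T.comap f) (hT : T ≤ M.comap r)
    (hfr : ∀ a, algebraMap A Aₜ (f (r a)) = algebraMap A Aₜ a) :
    Function.Bijective (IsLocalization.map Aₜ f hM : Rₘ →+* Aₜ) := by
  have hrf_loc : IsLocalization.map Rₘ (r.comp f) (fun _ hx => hT (hM hx)) = RingHom.id Rₘ :=
    IsLocalization.map_unique _ _ fun x => by simp [hrf x]
  have hfr_loc : IsLocalization.map Aₜ (f.comp r) (fun _ hx => hM (hT hx)) = RingHom.id Aₜ :=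
    IsLocalization.map_unique _ _ fun a => (hfr a).symm
  refine Function.bijective_iff_has_inverse.mpr
    ⟨IsLocalization.map Rₘ r hT, fun x => ?_, fun y => ?_⟩
  · rw [IsLocalization.map_map, hrf_loc, RingHom.id_apply]
  · rw [IsLocalization.map_map, hfr_loc, RingHom.id_apply]

namespace AOne

variable (k : Type) [Field k]

theorem bOne_sub_natCast_mul_aOne (i : ℕ) : (bOne k - i) * aOne k i = 0 := by
  rw [bOne, aOne, ← map_natCast (Ideal.Quotient.mk _), ← map_sub, ← map_mul,
    Ideal.Quotient.eq_zero_iff_mem]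
  exact Ideal.subset_span ⟨i, rfl⟩

noncomputable def retract : AOne k →ₐ[k] Polynomial k :=
  Ideal.Quotient.liftₐ _ (aeval (Sum.elim (fun _ => Polynomial.X) 0)) fun p hp => by
    refine (Ideal.span_le (I := RingHom.ker (aeval (Sum.elim (fun _ => Polynomial.X) 0) :
      MvPolynomial (Unit ⊕ ℕ) k →ₐ[k] Polynomial k))).mpr ?_ hp
    rintro _ ⟨i, rfl⟩
    simp

@[simp]
theorem retract_bOne : retract k (bOne k) = Polynomial.X :=
  aeval_X _ _

@[simp]
theorem retract_aOne (i : ℕ) : retract k (aOne k i) = 0 :=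
  aeval_X _ _

theorem retract_polyToAOne (p : Polynomial k) : retract k (polyToAOne k p) = p := by
  have : (retract k).comp (Polynomial.aeval (bOne k)) = AlgHom.id k _ :=
    Polynomial.algHom_ext (by simp)
  exact AlgHom.congr_fun this p

theorem algebraMap_aOne (i : ℕ) :
    algebraMap (AOne k) (Localization (SOne k)) (aOne k i) = 0 :=
  (IsLocalization.map_eq_zero_iff (SOne k) (Localization (SOne k)) _).mpr
    ⟨⟨_, Submonoid.subset_closure (Set.mem_range_self i)⟩, bOne_sub_natCast_mul_aOne k i⟩

theorem SOne_le_comap_retract : SOne k ≤ (SPoly k).comap (retract k).toRingHom :=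
  Submonoid.closure_le.mpr <| by
    rintro _ ⟨m, rfl⟩
    show retract k (bOne k - m) ∈ SPoly k
    rw [map_sub, map_natCast, retract_bOne]
    exact Submonoid.subset_closure (Set.mem_range_self m)

theorem algebraMap_polyToAOne_retract (a : AOne k) :
    algebraMap (AOne k) (Localization (SOne k)) (polyToAOne k (retract k a)) =
      algebraMap (AOne k) (Localization (SOne k)) a := by
  let ι := IsScalarTower.toAlgHom k (AOne k) (Localization (SOne k))
  have : ι.comp ((Polynomial.aeval (bOne k)).comp (retract k)) = ι := by
    refine Ideal.Quotient.algHom_ext _ (MvPolynomial.algHom_ext ?_)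
    rintro (_ | i)
    · change ι (polyToAOne k (retract k (bOne k))) = ι (bOne k)
      simp [polyToAOne]
    · change ι (polyToAOne k (retract k (aOne k i))) = ι (aOne k i)
      simp [ι, algebraMap_aOne]
  exact AlgHom.congr_fun this a

end AOne

/-- in the localization `S⁻¹A₁` the image of every `a_i` is zero, and the
natural map from the localization of `k[b]` at the multiplicative set generated by
`{b − m : m ∈ ℕ}` to `S⁻¹A₁` is an isomorphism. -/
theorem aOne_localization (k : Type) [Field k] :
    (∀ i : ℕ, algebraMap (AOne k) (Localization (SOne k)) (aOne k i) = 0) ∧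
    Function.Bijective
      (IsLocalization.map (M := SPoly k) (T := SOne k)
        (Localization (SOne k)) (polyToAOne k)
        (by
          refine Submonoid.closure_le.mpr ?_
          rintro x ⟨m, rfl⟩
          have h : polyToAOne k (Polynomial.X - (m : Polynomial k)) =
              bOne k - (m : AOne k) := by
            simp [polyToAOne]
          exact Submonoid.mem_comap.mpr (h ▸ Submonoid.subset_closure ⟨m, rfl⟩)) :
        Localization (SPoly k) →+* Localization (SOne k)) := by
  exact ⟨AOne.algebraMap_aOne k,
    IsLocalization.map_bijective_of_leftInverse (r := (AOne.retract k).toRingHom)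
      (AOne.retract_polyToAOne k) _ (AOne.SOne_le_comap_retract k)
      (AOne.algebraMap_polyToAOne_retract k)⟩
end

section
/- Let A be a commutative ring containing the rationals ℚ. The map Φ from the group of units of the formal power series ring A⟦t⟧ to A⟦t⟧ × Aˣ given by Φ(f) = (f′ · f^{−1}, constant coefficient of f), where f′ denotes the formal derivative, is a group isomorphism from the multiplicative group (A⟦t⟧)ˣ onto the product of the additive group (A⟦t⟧, +) with the multiplicative group Aˣ. (This is the isomorphism L⁺𝔾ₘ ≅ L⁺𝔸¹dt × 𝔾ₘ given by (dlog, ev), which is the content of Proposition 2.7 on the moduli of logarithmic rank 1 local systems.) -/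
/-!
`Φ` is a homomorphism because the logarithmic derivative of any derivation turns products
into sums. Over a `ℚ`-algebra a power series is determined by its derivative and constant
term, which makes the kernel trivial; and the equation `f' = g f` with `f(0) = a` can be
solved coefficient by coefficient, dividing by `n + 1` at step `n + 1`, which gives
surjectivity.
-/

open PowerSeries

namespace Derivation

variable {R S : Type*} [CommSemiring R] [CommSemiring S] [Algebra R S]

noncomputable def logDerivHom (D : Derivation R S S) : Sˣ →* Multiplicative S where
  toFun u := .ofAdd (D u * ↑u⁻¹)
  map_one' := by simp
  map_mul' u v := by
    rw [← ofAdd_add, mul_inv_rev, Units.val_mul, Units.val_mul, leibniz, smul_eq_mul,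
      smul_eq_mul, add_comm (D u * _)]
    congr 1
    calc (↑u * D v + ↑v * D u) * (↑v⁻¹ * ↑u⁻¹)
        = (↑u * ↑u⁻¹) * (D v * ↑v⁻¹) + (↑v * ↑v⁻¹) * (D u * ↑u⁻¹) := by ring
      _ = D v * ↑v⁻¹ + D u * ↑u⁻¹ := by rw [Units.mul_inv, Units.mul_inv, one_mul, one_mul]

theorem logDerivHom_apply (D : Derivation R S S) (u : Sˣ) :
    D.logDerivHom u = .ofAdd (D u * ↑u⁻¹) := rfl

theorem apply_eq_logDerivHom_mul (D : Derivation R S S) (u : Sˣ) :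
    D u = (D.logDerivHom u).toAdd * u := by
  rw [logDerivHom_apply, toAdd_ofAdd, mul_assoc, Units.inv_mul, mul_one]

end Derivation

namespace PowerSeries

variable {A : Type*} [CommRing A] [Algebra ℚ A]

/-- Coefficients of the solution of `f' = g * f`, `f(0) = a`. -/
noncomputable def linearODECoeff (g : A⟦X⟧) (a : A) : ℕ → A
  | 0 => a
  | n + 1 => (n + 1 : ℚ)⁻¹ • ∑ i ∈ Finset.range (n + 1), coeff i g * linearODECoeff g a (n - i)

theorem derivative_mk_linearODECoeff (g : A⟦X⟧) (a : A) :
    d⁄dX A (mk (linearODECoeff g a)) = g * mk (linearODECoeff g a) := by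
  ext n
  rw [coeff_derivative, coeff_mk, linearODECoeff, coeff_mul,
    Finset.Nat.sum_antidiagonal_eq_sum_range_succ_mk]
  simp only [coeff_mk]
  have cast_mul (s : A) : ((n : A) + 1) * s = ((n : ℚ) + 1) • s := by
    rw [Algebra.smul_def, map_add, map_natCast, map_one]
  rw [smul_mul_assoc, mul_comm, cast_mul, smul_smul,
    inv_mul_cancel₀ (by positivity), one_smul]

theorem exists_derivative_eq_mul (g : A⟦X⟧) (a : A) :
    ∃ f : A⟦X⟧, d⁄dX A f = g * f ∧ constantCoeff f = a :=
  ⟨mk (linearODECoeff g a), derivative_mk_linearODECoeff g a, by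
    rw [← coeff_zero_eq_constantCoeff_apply, coeff_mk, linearODECoeff]⟩

end PowerSeries

/-- for a commutative ring `A` containing `ℚ`, the map
`Φ : (A⟦t⟧)ˣ → A⟦t⟧ × Aˣ`, `Φ(f) = (f′·f⁻¹, constant coefficient of f)`, is a group
isomorphism from the multiplicative group of units of `A⟦t⟧` onto the product of the
additive group `(A⟦t⟧, +)` with the multiplicative group `Aˣ`.  This is the isomorphism
`L⁺𝔾ₘ ≅ L⁺𝔸¹dt × 𝔾ₘ` given by `(dlog, ev)`. -/
theorem dlog_ev_mulEquiv (A : Type) [CommRing A] [Algebra ℚ A] :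
    ∃ Φ : (PowerSeries A)ˣ ≃* Multiplicative (PowerSeries A) × Aˣ,
      ∀ f : (PowerSeries A)ˣ,
        Φ f =
          (Multiplicative.ofAdd
              (PowerSeries.derivativeFun (f : PowerSeries A) *
                ((f⁻¹ : (PowerSeries A)ˣ) : PowerSeries A)),
            Units.map (PowerSeries.constantCoeff : PowerSeries A →+* A).toMonoidHom f) := by
  let Φ := (d⁄dX A).logDerivHom.prod (Units.map (constantCoeff : A⟦X⟧ →+* A).toMonoidHom)
  have injective : Function.Injective Φ := by
    refine (injective_iff_map_eq_one Φ).2 fun f hf => Units.ext ?_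
    rw [MonoidHom.prod_apply, Prod.mk_eq_one] at hf
    have : IsAddTorsionFree A := .of_module_rat A
    refine derivative.ext ?_ ?_ <;> rw [Units.val_one]
    · rw [Derivation.apply_eq_logDerivHom_mul, hf.1, toAdd_one, zero_mul, derivative_one]
    · simpa using congrArg Units.val hf.2
  have surjective : Function.Surjective Φ := by
    rintro ⟨g, a⟩
    obtain ⟨f, hD, hc⟩ := exists_derivative_eq_mul g.toAdd a
    obtain ⟨u, rfl⟩ : IsUnit f := isUnit_iff_constantCoeff.2 (hc ▸ a.isUnit)
    refine ⟨u, Prod.ext ?_ (Units.ext hc)⟩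
    change Multiplicative.ofAdd _ = g
    rw [hD, mul_assoc, Units.mul_inv, mul_one, ofAdd_toAdd]
  exact ⟨.ofBijective Φ ⟨injective, surjective⟩, fun f => rfl⟩
end

section
/- Let A be a commutative ring containing the rationals ℚ, let y ∈ A be a nilpotent element, and let f ∈ A⟦t⟧ be a formal power series satisfying t·f′ = y·f, where f′ is the formal derivative. Then f is constant, i.e. f equals the constant power series with value its constant coefficient a₀, and moreover y·a₀ = 0. (This computation, showing that a flat section of the connection d − y·dt/t over a nilpotent thickening is a constant killed by y, is the content of the proof of Lemma 6.3, identifying the formal completion of Y along Z^{≤0} with the formal completion of C/𝔾ₘ along the x-axis.) -/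
/-! Comparing coefficients of `t^n` gives `(n - y) a_n = 0`. For `n = 0` this is `y a_0 = 0`;
for `n ≥ 1`, `n - y` is a unit (a unit plus a nilpotent), so `a_n = 0`. -/

theorem IsNilpotent.isUnit_natCast_sub {A : Type*} [Ring A] [Algebra ℚ A] {y : A}
    (hy : IsNilpotent y) {n : ℕ} (hn : n ≠ 0) : IsUnit ((n : A) - y) := by
  have hn : IsUnit (n : A) := by
    simpa using (isUnit_iff_ne_zero.mpr (Nat.cast_ne_zero.mpr hn : (n : ℚ) ≠ 0)).map
      (algebraMap ℚ A)
  simpa only [sub_eq_add_neg] using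
    hy.neg.isUnit_add_left_of_commute hn (Nat.cast_commute n _).symm

namespace PowerSeries

theorem coeff_X_mul_derivative {A : Type*} [CommSemiring A] (f : A⟦X⟧) (n : ℕ) :
    coeff n (X * d⁄dX A f) = n * coeff n f := by
  cases n with
  | zero => simp
  | succ n => rw [coeff_succ_X_mul, coeff_derivative, mul_comm, Nat.cast_succ]

end PowerSeries

open PowerSeries in
/-- let `A` be a commutative ring containing `ℚ`, `y ∈ A` nilpotent, and
`f ∈ A⟦t⟧` a formal power series with `t·f′ = y·f` (where `f′` is the formal derivative).
Then `f` is constant, equal to the constant power series on its constant coefficient `a₀`,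
and moreover `y·a₀ = 0`. -/
theorem flat_section_of_nilpotent_residue (A : Type) [CommRing A] [Algebra ℚ A]
    (y : A) (hy : IsNilpotent y) (f : PowerSeries A)
    (hf : PowerSeries.X * PowerSeries.derivativeFun f = PowerSeries.C y * f) :
    f = PowerSeries.C (PowerSeries.constantCoeff f) ∧
      y * PowerSeries.constantCoeff f = 0 := by
  -- `derivativeFun` is the unbundled form of the derivation `d⁄dX A`
  change X * d⁄dX A f = C y * f at hf
  have hcoeff (n : ℕ) : ((n : A) - y) * coeff n f = 0 := by
    have h := congrArg (coeff n) hf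
    rw [coeff_X_mul_derivative, coeff_C_mul] at h
    rw [sub_mul, h, sub_self]
  have hy0 : y * constantCoeff f = 0 := by simpa using hcoeff 0
  refine ⟨?_, hy0⟩
  ext (_ | n)
  · simp
  · simpa using (hy.isUnit_natCast_sub n.succ_ne_zero).mul_right_eq_zero.mp (hcoeff (n + 1))
end
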